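/- arXiv:2605.00594 — 6 statements merged into one kernel-verified Lean document; each statement's English description precedes it below -/
import Mathlib

section
/- Let n, d ≥ 1 be integers and c ∈ [0, n] a real number. Then T_d(−c/n − 1)² ≥ (1/4)·(1 + √(2c/n))^{2d}, where T_d is the Chebyshev polynomial of the first kind. -/
open Polynomial Complex in
lemma key_cheb_cosh (d : ℕ) (t : ℝ) :
    ((Polynomial.Chebyshev.T ℝ d).eval (-Real.cosh t))^2 = (Real.cosh (d*t))^2 := by
  have h1 : ((-Real.cosh t : ℝ) : ℂ) = Complex.cos ((Real.pi : ℂ) + t*Complex.I) := by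
    rw [Complex.cos_add, Complex.cos_mul_I, Complex.sin_mul_I]
    simp [Complex.cos_ofReal_re, Complex.sin_ofReal_re]
  have h : ((((Polynomial.Chebyshev.T ℝ d).eval (-Real.cosh t))^2 : ℝ) : ℂ)
      = (((Real.cosh (d*t))^2 : ℝ) : ℂ) := by
    push_cast [-Complex.ofReal_neg]
    rw [h1, Polynomial.Chebyshev.T_complex_cos]
    have h2 : (((d:ℤ) : ℂ)) * ((Real.pi : ℂ) + t*Complex.I) = ((d:ℤ):ℂ)*Real.pi + ((d:ℂ)*t)*Complex.I := by
      push_cast; ring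
    rw [h2, Complex.cos_add, Complex.cos_mul_I, Complex.sin_mul_I, Complex.sin_int_mul_pi]
    have h3 : Complex.cos (((d:ℤ):ℂ)*Real.pi) ^ 2 = 1 := by
      have := Complex.sin_sq_add_cos_sq (((d:ℤ):ℂ)*Real.pi)
      rw [Complex.sin_int_mul_pi] at this
      simpa using this
    linear_combination (Complex.cosh ((d:ℂ)*t))^2 * h3
  exact_mod_cast h

theorem stmt4 (n d : ℕ) (hn : 1 ≤ n) (hd : 1 ≤ d) (c : ℝ) (hc : c ∈ Set.Icc (0 : ℝ) n) :
    ((Polynomial.Chebyshev.T ℝ d).eval (-(c / n) - 1)) ^ 2 ≥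
      (1 / 4) * (1 + Real.sqrt (2 * c / n)) ^ (2 * d) := by
  obtain ⟨hc0, hcn⟩ := hc
  have hn0 : (0:ℝ) < n := by exact_mod_cast Nat.pos_of_ne_zero (by omega)
  set y : ℝ := c / n + 1 with hy_def
  have hy1 : 1 ≤ y := by
    have : 0 ≤ c / n := div_nonneg hc0 hn0.le
    simp [hy_def]; linarith
  set s : ℝ := Real.sqrt (y^2 - 1) with hs_def
  have hs0 : 0 ≤ s := Real.sqrt_nonneg _
  have hs_sq : s^2 = y^2 - 1 := Real.sq_sqrt (by nlinarith)
  have hys_pos : 0 < y + s := by linarith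
  set t : ℝ := Real.log (y + s) with ht_def
  have hexp : Real.exp t = y + s := Real.exp_log hys_pos
  have hexp_neg : Real.exp (-t) = y - s := by
    have hprod : (y+s)*(y-s) = 1 := by nlinarith
    rw [Real.exp_neg, hexp, inv_eq_of_mul_eq_one_right hprod]
  have hcosh : Real.cosh t = y := by
    rw [Real.cosh_eq, hexp, hexp_neg]; ring
  have heval : -(c / n) - 1 = -Real.cosh t := by rw [hcosh]; ring
  rw [heval, key_cheb_cosh]
  -- lower bound on cosh (d*t)
  have hexp_dt : Real.exp ((d:ℝ)*t) = (y+s)^d := by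
    rw [← hexp, ← Real.exp_nat_mul]
  have hbound : 1 + Real.sqrt (2*c/n) ≤ y + s := by
    have h1 : Real.sqrt (2*c/n) ≤ s := by
      apply Real.sqrt_le_sqrt
      have : 2*c/n = 2*(c/n) := by ring
      rw [this]
      nlinarith [sq_nonneg (c/n)]
    linarith
  have hsq_nonneg : 0 ≤ 1 + Real.sqrt (2*c/n) := by positivity
  have hpow : (1 + Real.sqrt (2*c/n))^d ≤ (y+s)^d := pow_le_pow_left₀ hsq_nonneg hbound d
  have hcosh_ge : (1 + Real.sqrt (2*c/n))^d / 2 ≤ Real.cosh ((d:ℝ)*t) := by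
    rw [Real.cosh_eq, hexp_dt]
    have := Real.exp_pos (-((d:ℝ)*t))
    linarith
  have hhalf : 0 ≤ (1 + Real.sqrt (2*c/n))^d / 2 := by positivity
  have := mul_self_le_mul_self hhalf hcosh_ge
  calc (1 / 4) * (1 + Real.sqrt (2 * c / n)) ^ (2 * d)
      = ((1 + Real.sqrt (2*c/n))^d / 2) * ((1 + Real.sqrt (2*c/n))^d / 2) := by
        rw [mul_comm 2 d, pow_mul]; ring
    _ ≤ Real.cosh ((d:ℝ)*t) * Real.cosh ((d:ℝ)*t) := this
    _ = (Real.cosh ((d:ℝ)*t))^2 := by ring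
end

section
/- Let q ∈ (0,1) and n ≥ 1. Define τ(x) = (1/8)·T_d((x − 1 + r₀)/n − 1)^m where r₀ is the smallest root of T_d(x/n − 1), d = ⌈3√n⌉, and m = ⌈(1/2)·log₂(64/q)⌉. Then τ(0)² > 1/q. -/
open Real Polynomial.Chebyshev Polynomial

lemma cheb_parity (n : ℕ) (x : ℝ) :
    (T ℝ n).eval (-x) = (-1 : ℝ) ^ n * (T ℝ n).eval x := by
  induction n using Nat.twoStepInduction with
  | zero => simp
  | one => simp
  | more k ih1 ih2 =>
    have h : (T ℝ ((k : ℤ) + 2)) = 2 * X * T ℝ ((k : ℤ) + 1) - T ℝ (k : ℤ) :=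
      T_add_two ℝ k
    have hc : ((k + 2 : ℕ) : ℤ) = (k : ℤ) + 2 := by push_cast; ring
    have hc1 : ((k + 1 : ℕ) : ℤ) = (k : ℤ) + 1 := by push_cast; ring
    rw [hc, h]
    simp only [eval_sub, eval_mul, eval_ofNat, eval_X]
    rw [← hc1, ih2, ih1]
    ring

lemma cheb_grow (x : ℝ) (hx : 1 ≤ x) : ∀ n : ℕ,
    1 + (n : ℝ) ^ 2 * (x - 1) ≤ (T ℝ n).eval x ∧
    (2 * (n : ℝ) + 1) * (x - 1) ≤ (T ℝ (n + 1 : ℕ)).eval x - (T ℝ n).eval x := by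
  intro n
  induction n with
  | zero => simp
  | succ k ih =>
    obtain ⟨A, B⟩ := ih
    have hA1 : 1 + ((k : ℝ) + 1) ^ 2 * (x - 1) ≤ (T ℝ (k + 1 : ℕ)).eval x := by
      push_cast at B ⊢; nlinarith
    constructor
    · push_cast; push_cast at hA1; linarith
    · have h : (T ℝ ((k : ℤ) + 2)) = 2 * X * T ℝ ((k : ℤ) + 1) - T ℝ (k : ℤ) :=
        T_add_two ℝ k
      have hc : ((k + 2 : ℕ) : ℤ) = (k : ℤ) + 2 := by push_cast; ring
      have hc1 : ((k + 1 : ℕ) : ℤ) = (k : ℤ) + 1 := by push_cast; ring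
      have he : (T ℝ (k + 2 : ℕ)).eval x
          = 2 * x * (T ℝ (k + 1 : ℕ)).eval x - (T ℝ (k : ℕ)).eval x := by
        rw [hc, h]; simp [hc1]
      have : ((k : ℕ) + 1 + 1 : ℕ) = (k + 2 : ℕ) := by ring
      rw [this, he]
      push_cast at hA1 B ⊢
      nlinarith [mul_le_mul_of_nonneg_left hA1 (by linarith : (0:ℝ) ≤ 2*(x-1)), sq_nonneg ((k:ℝ)+1), mul_nonneg (mul_nonneg (sq_nonneg ((k:ℝ)+1)) (by linarith : (0:ℝ) ≤ x-1)) (by linarith : (0:ℝ) ≤ x-1)]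

theorem stmt9 (q : ℝ) (hq : q ∈ Set.Ioo (0 : ℝ) 1) (n : ℕ) (hn : 1 ≤ n)
    (d m : ℕ) (hd : d = ⌈3 * Real.sqrt n⌉₊)
    (hm : m = ⌈(1 / 2 : ℝ) * Real.logb 2 (64 / q)⌉₊)
    (r₀ : ℝ) (hr₀ : r₀ = n * (1 - Real.cos (π / (2 * d))))
    (τ : ℝ → ℝ)
    (hτ : ∀ x : ℝ, τ x =
      (1 / 8) * ((Polynomial.Chebyshev.T ℝ d).eval ((x - 1 + r₀) / n - 1)) ^ m) :
    (τ 0) ^ 2 > 1 / q := by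
  obtain ⟨hq0, hq1⟩ := hq
  have hn1 : (1 : ℝ) ≤ (n : ℝ) := by exact_mod_cast hn
  have hnpos : (0 : ℝ) < (n : ℝ) := by linarith
  have hs : (1 : ℝ) ≤ Real.sqrt n := by
    rw [show (1:ℝ) = Real.sqrt 1 by simp]
    exact Real.sqrt_le_sqrt hn1
  have hdge : 3 * Real.sqrt n ≤ (d : ℝ) := by
    rw [hd]; exact Nat.le_ceil _
  have hsq : (Real.sqrt n) ^ 2 = (n : ℝ) := Real.sq_sqrt (by positivity)
  have hd2 : 9 * (n : ℝ) ≤ (d : ℝ) ^ 2 := by nlinarith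
  have hdpos : (0 : ℝ) < (d : ℝ) := by linarith
  obtain ⟨c, hc⟩ : ∃ c : ℝ, c = Real.cos (π / (2 * d)) := ⟨_, rfl⟩
  have hpi : π ≤ 3.15 := Real.pi_lt_d2.le
  have hpi0 : 0 < π := Real.pi_pos
  have hcos : 1 - (π / (2 * d)) ^ 2 / 2 ≤ c := hc ▸ Real.one_sub_sq_div_two_le_cos
  have hcb : 1 - c ≤ π ^ 2 / (8 * (d:ℝ)^2) := by
    have he : (π / (2 * d)) ^ 2 / 2 = π^2 / (8 * (d:ℝ)^2) := by
      field_simp; ring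
    linarith [he ▸ hcos]
  have hπ2 : π ^ 2 ≤ 10 := by nlinarith
  have h1c : 1 - c ≤ 10 / (72 * (n:ℝ)) := by
    have hp1 : π ^ 2 / (8 * (d:ℝ)^2) ≤ 10 / (72 * (n:ℝ)) := by
      rw [div_le_div_iff₀ (by positivity) (by positivity)]
      nlinarith
    linarith
  obtain ⟨y, hy⟩ : ∃ y : ℝ, y = c + 1 / n := ⟨_, rfl⟩
  have hδ : (62 : ℝ) / (72 * n) ≤ y - 1 := by
    have h1 : y - 1 = 1 / n - (1 - c) := by rw [hy]; ring
    have h2 : (62 : ℝ) / (72 * n) = 1/n - 10 / (72 * n) := by field_simp; ring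
    rw [h1, h2]; linarith
  have hy1 : (1 : ℝ) ≤ y := by
    have hp : (0:ℝ) < 62 / (72 * n) := by positivity
    linarith
  obtain ⟨Tv, hTv⟩ : ∃ Tv : ℝ, Tv = (T ℝ d).eval y := ⟨_, rfl⟩
  have hgrow : 1 + (d:ℝ) ^ 2 * (y - 1) ≤ Tv := hTv ▸ (cheb_grow y hy1 d).1
  have hTvbig : (8 : ℝ) ≤ Tv := by
    have h1 : 9 * (n:ℝ) * (y - 1) ≤ (d:ℝ)^2 * (y-1) := by
      have := sub_nonneg.mpr hy1
      nlinarith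
    have h2 : (62:ℝ)/8 ≤ 9 * (n:ℝ) * (y - 1) := by
      have h3 := mul_le_mul_of_nonneg_left hδ (by positivity : (0:ℝ) ≤ 9 * n)
      calc (62:ℝ)/8 = 9 * (n:ℝ) * (62 / (72 * n)) := by field_simp; ring
        _ ≤ 9 * (n:ℝ) * (y - 1) := h3
    linarith
  have harg : (0 - 1 + r₀) / n - 1 = -y := by
    rw [hr₀, hy, hc]
    field_simp
    ring
  have hτ0 : τ 0 = (1/8) * ((-1:ℝ)^d * Tv) ^ m := by
    rw [hτ 0, harg, cheb_parity d y, hTv]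
  have h64q : (1:ℝ) < 64 / q := by
    rw [lt_div_iff₀ hq0]; linarith
  have hlogpos : 0 < Real.logb 2 (64 / q) := Real.logb_pos one_lt_two h64q
  have hm0 : m ≠ 0 := by
    have : 0 < m := hm ▸ Nat.ceil_pos.mpr (by positivity)
    omega
  have hmge : (1/2 : ℝ) * Real.logb 2 (64 / q) ≤ m := by
    rw [hm]; exact Nat.le_ceil _
  have hlog2m : Real.logb 2 (64 / q) ≤ (2 * m : ℝ) := by linarith
  have hpow : 64 / q ≤ (4 : ℝ) ^ m := by
    have h1 := (Real.logb_le_iff_le_rpow one_lt_two (by positivity : (0:ℝ) < 64/q)).mp hlog2m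
    have h2 : (2:ℝ) ^ ((2 * m : ℝ)) = (4:ℝ) ^ m := by
      rw [show ((2:ℝ) * m) = ((2 * m : ℕ) : ℝ) by push_cast; ring, Real.rpow_natCast,
        pow_mul]
      norm_num
    linarith [h2 ▸ h1]
  have hτsq : (τ 0)^2 = (1/64) * (Tv^2) ^ m := by
    rw [hτ0, mul_pow]
    have h1 : (((-1:ℝ)^d * Tv) ^ m)^2 = (((-1:ℝ)^d * Tv) ^ 2)^m := by
      rw [← pow_mul, ← pow_mul, Nat.mul_comm]
    rw [h1, mul_pow, ← pow_mul, Nat.mul_comm d 2, pow_mul]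
    norm_num
  clear hτ hTv hgrow harg hτ0 hcos hcb hc hy hδ hd hm hr₀ h1c hdge hsq hs
  have hT4 : (4:ℝ) < Tv^2 := by
    have h88 : (8:ℝ)*8 ≤ Tv*Tv := mul_le_mul hTvbig hTvbig (by norm_num) (by linarith)
    rw [sq]; linarith
  have hlt : (4:ℝ)^m < (Tv^2)^m := pow_lt_pow_left₀ hT4 (by norm_num) hm0
  rw [hτsq]
  have hfin : 64 / q < (Tv^2)^m := lt_of_le_of_lt hpow hlt
  rw [div_lt_iff₀ hq0] at hfin
  rw [gt_iff_lt, div_lt_iff₀ hq0]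
  linarith
end

section
/- Let d, N ≥ 1 be integers and m ≥ 1. Define σ₁(x) = (1/64)·T_d((x − c + r₀)/N − 1)^{2m} where c ∈ ℤ, and r₀ is the smallest root of T_d(x/N − 1). If d^{4m} ≤ 32·N^{2m}, then for all x ∈ [c, c+1], σ₁(x) ≤ (x − c)/2. -/
open Polynomial Polynomial.Chebyshev Real

private lemma abs_sin_nat_mul (n : ℕ) (x : ℝ) : |Real.sin (n * x)| ≤ n * |Real.sin x| := by
  induction n with
  | zero => simp
  | succ k ih =>
    have : ((k : ℝ) + 1) * x = k * x + x := by ring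
    push_cast
    rw [this, Real.sin_add]
    calc |Real.sin (k*x) * Real.cos x + Real.cos (k*x) * Real.sin x|
        ≤ |Real.sin (k*x) * Real.cos x| + |Real.cos (k*x) * Real.sin x| := abs_add_le _ _
      _ ≤ |Real.sin (k*x)| * 1 + 1 * |Real.sin x| := by
          rw [abs_mul, abs_mul]
          have h1 := Real.abs_cos_le_one x
          have h2 := Real.abs_cos_le_one ((k:ℝ)*x)
          have h3 := abs_nonneg (Real.sin ((k:ℝ)*x))
          have h4 := abs_nonneg (Real.sin x)
          nlinarith [mul_nonneg h3 (by linarith : (0:ℝ) ≤ 1 - |Real.cos x|),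
            mul_nonneg h4 (by linarith : (0:ℝ) ≤ 1 - |Real.cos ((k:ℝ)*x)|)]
      _ ≤ (k : ℝ) * |Real.sin x| + 1 * |Real.sin x| := by
          rw [mul_one]
          exact add_le_add ih le_rfl
      _ = ((k : ℝ) + 1) * |Real.sin x| := by ring

private lemma abs_U_le (n : ℕ) : ∀ y ∈ Set.Icc (-1:ℝ) 1, |(U ℝ n).eval y| ≤ n + 1 := by
  have hIoo : ∀ y ∈ Set.Ioo (-1:ℝ) 1, |(U ℝ n).eval y| ≤ n + 1 := by
    intro y hy
    set θ := Real.arccos y with hθ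
    have hy1 : -1 ≤ y := hy.1.le
    have hy2 : y ≤ 1 := hy.2.le
    have hcos : Real.cos θ = y := Real.cos_arccos hy1 hy2
    have hsin : Real.sin θ = Real.sqrt (1 - y^2) := Real.sin_arccos y
    have hsinpos : 0 < Real.sin θ := by
      rw [hsin]
      apply Real.sqrt_pos.mpr
      nlinarith [hy.1, hy.2]
    have hU := Polynomial.Chebyshev.U_real_cos θ (n : ℤ)
    rw [hcos] at hU
    have key : |(U ℝ n).eval y| * Real.sin θ ≤ ((n:ℝ) + 1) * Real.sin θ := by
      have : |(U ℝ n).eval y| * Real.sin θ = |(U ℝ n).eval y * Real.sin θ| := by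
        rw [abs_mul, abs_of_pos hsinpos]
      rw [this, hU]
      have := abs_sin_nat_mul (n+1) θ
      push_cast at this ⊢
      calc |Real.sin (((n:ℝ)+1) * θ)| ≤ ((n:ℝ)+1) * |Real.sin θ| := this
        _ = ((n:ℝ)+1) * Real.sin θ := by rw [abs_of_pos hsinpos]
    exact le_of_mul_le_mul_right key hsinpos
  have hcl : Set.Icc (-1:ℝ) 1 ⊆ closure (Set.Ioo (-1:ℝ) 1) := by
    rw [closure_Ioo (by norm_num : (-1:ℝ) ≠ 1)]
  intro y hy
  have := le_on_closure (f := fun y => |(U ℝ n).eval y|) (g := fun _ => (n:ℝ) + 1) hIoo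
    ((continuous_abs.comp (Polynomial.continuous _)).continuousOn) continuousOn_const
  exact this (hcl hy)

private lemma T_neg_ge (y : ℝ) (hy : y ≤ -1) : ∀ n : ℕ,
    1 ≤ (-1:ℝ)^n * (T ℝ n).eval y ∧
    (-1:ℝ)^n * (T ℝ n).eval y ≤ (-1:ℝ)^(n+1) * (T ℝ (n+1)).eval y := by
  intro n
  induction n with
  | zero =>
    constructor
    · simp [Polynomial.Chebyshev.T_zero]
    · push_cast
      simp only [zero_add, Polynomial.Chebyshev.T_one, Polynomial.Chebyshev.T_zero,
        pow_zero, pow_one, one_mul, Polynomial.eval_one, Polynomial.eval_X]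
      linarith
  | succ k ih =>
    obtain ⟨ih1, ih2⟩ := ih
    have h1 : 1 ≤ (-1:ℝ)^(k+1) * (T ℝ (k+1)).eval y := le_trans ih1 ih2
    refine ⟨h1, ?_⟩
    have hrec := Polynomial.Chebyshev.T_add_two ℝ (k : ℤ)
    have heval : (T ℝ ((k:ℤ)+2)).eval y = 2 * y * (T ℝ ((k:ℤ)+1)).eval y - (T ℝ (k:ℤ)).eval y := by
      rw [hrec]; simp
    have hcast : ((k:ℕ)+1+1 : ℤ) = (k:ℤ)+2 := by push_cast; ring
    push_cast
    rw [hcast, heval]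
    have e1 : (-1:ℝ)^(k+1) = -((-1:ℝ)^k) := by rw [pow_succ]; ring
    have e2 : (-1:ℝ)^(k+1+1) = (-1:ℝ)^k := by rw [pow_succ, pow_succ]; ring
    rw [e2]
    rw [e1] at ih2 h1 ⊢
    nlinarith [mul_nonneg (by linarith : (0:ℝ) ≤ -y - 1)
      (by linarith : (0:ℝ) ≤ -((-1:ℝ)^k * (T ℝ ((k:ℤ)+1)).eval y) - 1)]

theorem stmt10 (d N m : ℕ) (hd : 1 ≤ d) (hN : 1 ≤ N) (hm : 1 ≤ m) (c : ℤ)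
    (r₀ : ℝ)
    (hroot : (Polynomial.Chebyshev.T ℝ d).eval (r₀ / N - 1) = 0)
    (hmin : ∀ r : ℝ, (Polynomial.Chebyshev.T ℝ d).eval (r / N - 1) = 0 → r₀ ≤ r)
    (σ₁ : ℝ → ℝ)
    (hσ₁ : ∀ x : ℝ, σ₁ x =
      (1 / 64) * ((Polynomial.Chebyshev.T ℝ d).eval ((x - c + r₀) / N - 1)) ^ (2 * m))
    (hdN : (d : ℝ) ^ (4 * m) ≤ 32 * (N : ℝ) ^ (2 * m)) :
    ∀ x ∈ Set.Icc (c : ℝ) ((c : ℝ) + 1), σ₁ x ≤ (x - c) / 2 := by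
  have hNpos : (0:ℝ) < N := by exact_mod_cast hN
  have hdpos : (0:ℝ) < d := by exact_mod_cast hd
  set a : ℝ := r₀ / N - 1 with ha_def
  clear_value a
  -- a ≤ 0 via explicit root
  have hcosnn : 0 ≤ Real.cos (π / (2*d)) := by
    apply Real.cos_nonneg_of_mem_Icc
    have hd1 : (1:ℝ) ≤ d := by exact_mod_cast hd
    constructor
    · have h0 : (0:ℝ) ≤ π / (2*d) := by positivity
      nlinarith [Real.pi_pos]
    · rw [div_le_div_iff₀ (by positivity) (by norm_num)]
      nlinarith [Real.pi_pos, hd1]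
  have hrootr : (T ℝ d).eval ((N * (1 - Real.cos (π / (2*d)))) / N - 1) = 0 := by
    have h1 : (N * (1 - Real.cos (π / (2*d)))) / N - 1 = Real.cos (π - π/(2*d)) := by
      rw [Real.cos_pi_sub]
      field_simp
      ring
    rw [h1, Polynomial.Chebyshev.T_real_cos]
    have h2 : (d:ℝ) * (π - π/(2*d)) = (d:ℝ) * π - π/2 := by
      field_simp
    push_cast
    rw [h2, show (d:ℝ)*π - π/2 = -(π/2 - d*π) by ring, Real.cos_neg,
      Real.cos_pi_div_two_sub, Real.sin_nat_mul_pi]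
  have ha0 : a ≤ 0 := by
    have := hmin _ hrootr
    have : r₀ / N ≤ 1 - Real.cos (π / (2*d)) := by
      rw [div_le_iff₀ hNpos]
      nlinarith
    simp only [ha_def]
    nlinarith
  -- -1 ≤ a
  have ha1 : -1 ≤ a := by
    by_contra h
    push_neg at h
    have h2 := (T_neg_ge a (by linarith) d).1
    rw [hroot, mul_zero] at h2
    linarith
  -- derivative bound on Icc
  have hderiv : ∀ y ∈ Set.Icc (-1:ℝ) 1,
      ‖(Polynomial.derivative (T ℝ d)).eval y‖ ≤ (d:ℝ)^2 := by
    intro y hy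
    have hidx : ((d:ℤ) - 1) = ((d - 1 : ℕ) : ℤ) := by omega
    have hfact : (Polynomial.derivative (T ℝ d)).eval y
        = (d:ℝ) * (U ℝ ((d - 1 : ℕ) : ℤ)).eval y := by
      rw [Polynomial.Chebyshev.T_derivative_eq_U, hidx]
      simp
    rw [hfact, Real.norm_eq_abs, abs_mul, abs_of_pos hdpos]
    have hU := abs_U_le (d-1) y hy
    have hd1 : ((d - 1 : ℕ) : ℝ) + 1 = (d:ℝ) := by
      push_cast [Nat.cast_sub hd]
      try ring
    rw [hd1] at hU
    calc (d:ℝ) * |(U ℝ ((d-1:ℕ):ℤ)).eval y| ≤ (d:ℝ) * (d:ℝ) :=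
        mul_le_mul_of_nonneg_left hU hdpos.le
      _ = (d:ℝ)^2 := by ring
  intro x hx
  obtain ⟨hx1, hx2⟩ := hx
  set s : ℝ := x - c with hs_def
  clear_value s
  have hs0 : 0 ≤ s := by simp [hs_def]; linarith
  have hs1 : s ≤ 1 := by simp [hs_def]; linarith
  set t : ℝ := (x - c + r₀) / N - 1 with ht_def
  clear_value t
  have hta : t = a + s / N := by
    simp only [ht_def, ha_def, hs_def]
    field_simp
    ring
  have hsN0 : (0:ℝ) ≤ s / N := div_nonneg hs0 hNpos.le
  have hsN1 : s / N ≤ 1 := by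
    rw [div_le_one hNpos]
    have hN1 : (1:ℝ) ≤ N := by exact_mod_cast hN
    linarith
  have htmem : t ∈ Set.Icc (-1:ℝ) 1 := by
    rw [hta]
    constructor
    · linarith
    · linarith
  have hamem : a ∈ Set.Icc (-1:ℝ) 1 := ⟨ha1, by linarith⟩
  -- MVT
  have hmvt := (convex_Icc (-1:ℝ) 1).norm_image_sub_le_of_norm_hasDerivWithin_le
    (f := fun y => (T ℝ d).eval y)
    (f' := fun y => (Polynomial.derivative (T ℝ d)).eval y)
    (fun y hy => (Polynomial.hasDerivAt _ y).hasDerivWithinAt)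
    hderiv hamem htmem
  simp only [Real.norm_eq_abs] at hmvt
  rw [hroot, sub_zero] at hmvt
  have htabs : |t - a| = s / N := by
    rw [hta]
    simp only [add_sub_cancel_left]
    rw [abs_of_nonneg hsN0]
  rw [htabs] at hmvt
  -- final estimate
  have hTbound : |(T ℝ d).eval t| ≤ (d:ℝ)^2 * s / N := by
    calc |(T ℝ d).eval t| ≤ (d:ℝ)^2 * (s / N) := hmvt
      _ = (d:ℝ)^2 * s / N := by ring
  rw [hσ₁, ← ht_def]
  have h0ev : (0:ℝ) ≤ ((T ℝ d).eval t) ^ (2*m) := by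
    rw [pow_mul]; positivity
  have hpow : ((T ℝ d).eval t) ^ (2*m) = |(T ℝ d).eval t| ^ (2*m) := by
    rw [← abs_pow, abs_of_nonneg h0ev]
  have h2 : |(T ℝ d).eval t| ^ (2*m) ≤ ((d:ℝ)^2 * s / N) ^ (2*m) :=
    pow_le_pow_left₀ (abs_nonneg _) hTbound _
  have h3 : ((d:ℝ)^2 * s / N) ^ (2*m) = (d:ℝ)^(4*m) * s^(2*m) / (N:ℝ)^(2*m) := by
    rw [div_pow, mul_pow, ← pow_mul]
    ring_nf
  have h4 : s^(2*m) ≤ s := by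
    calc s^(2*m) ≤ s^1 := pow_le_pow_of_le_one hs0 hs1 (by omega)
      _ = s := pow_one s
  have h5 : (d:ℝ)^(4*m) * s^(2*m) ≤ 32 * (N:ℝ)^(2*m) * s := by
    calc (d:ℝ)^(4*m) * s^(2*m) ≤ (32 * (N:ℝ)^(2*m)) * s^(2*m) :=
          mul_le_mul_of_nonneg_right hdN (pow_nonneg hs0 _)
      _ ≤ (32 * (N:ℝ)^(2*m)) * s := mul_le_mul_of_nonneg_left h4 (by positivity)
  have hNp : (0:ℝ) < (N:ℝ)^(2*m) := by positivity
  calc (1/64 : ℝ) * ((T ℝ d).eval t) ^ (2*m)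
      = (1/64) * (|(T ℝ d).eval t| ^ (2*m)) := by rw [hpow]
    _ ≤ (1/64) * ((d:ℝ)^(4*m) * s^(2*m) / (N:ℝ)^(2*m)) := by rw [← h3]; linarith
    _ ≤ (1/64) * (32 * (N:ℝ)^(2*m) * s / (N:ℝ)^(2*m)) := by
        gcongr
    _ = s / 2 := by field_simp; ring
end

section
/- Let W(x) = ∏_{j=a+1}^{n} (x − j) for integers a < n. For any s ∈ (0, 1), any integer k with a+2 ≤ k ≤ n, and any x ∈ (k−1, k): |W(x)| ≤ (k − a − 1)!·(n − k + 1)! ≤ (n − a)! ≤ |W(a − s)|. -/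
open Finset

lemma helperProd (c : ℤ) : ∀ m : ℤ, c ≤ m →
    ∏ j ∈ Finset.Ioc c m, ((j : ℝ) - (c : ℝ)) = ((m - c).toNat).factorial := by
  refine Int.le_induction ?_ ?_
  · simp
  · intro m hm ih
    have hset : Finset.Ioc c (m + 1) = Finset.Ioc c m ∪ {m + 1} := by
      ext y; simp; omega
    have hdisj : Disjoint (Finset.Ioc c m) ({m + 1} : Finset ℤ) := by
      simp
    rw [hset, Finset.prod_union hdisj, ih, Finset.prod_singleton]
    have h1 : (m + 1 - c).toNat = (m - c).toNat + 1 := by omega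
    rw [h1, Nat.factorial_succ]
    have hcast : ((m - c).toNat : ℝ) = (m : ℝ) - c := by
      have h2 := Int.toNat_of_nonneg (show (0:ℤ) ≤ m - c by omega)
      exact_mod_cast congrArg (Int.cast : ℤ → ℝ) h2
    push_cast
    rw [hcast]; ring

theorem stmt11 (a n : ℤ) (han : a + 1 ≤ n) (s : ℝ) (hs : s ∈ Set.Ioo (0 : ℝ) 1)
    (k : ℤ) (hk1 : a + 2 ≤ k) (hk2 : k ≤ n) (x : ℝ)
    (hx : x ∈ Set.Ioo ((k : ℝ) - 1) (k : ℝ)) :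
    |∏ j ∈ Finset.Icc (a + 1) n, (x - (j : ℝ))| ≤
        (Nat.factorial (k - a - 1).toNat : ℝ) * (Nat.factorial (n - k + 1).toNat : ℝ) ∧
      (Nat.factorial (k - a - 1).toNat : ℝ) * (Nat.factorial (n - k + 1).toNat : ℝ) ≤
        (Nat.factorial (n - a).toNat : ℝ) ∧
      (Nat.factorial (n - a).toNat : ℝ) ≤
        |∏ j ∈ Finset.Icc (a + 1) n, ((a : ℝ) - s - (j : ℝ))| := by
  obtain ⟨hs0, hs1⟩ := hs
  obtain ⟨hx1, hx2⟩ := hx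
  have hIcc : Finset.Icc (a + 1) n = Finset.Ioc a n := by ext y; simp
  refine ⟨?_, ?_, ?_⟩
  · -- part 1
    rw [hIcc, ← Finset.Ioc_union_Ioc_eq_Ioc (show a ≤ k - 1 by omega) (show k - 1 ≤ n by omega),
      Finset.prod_union (by
        rw [Finset.disjoint_left]; intro y hy hy'
        rw [Finset.mem_Ioc] at hy hy'; omega), abs_mul]
    have h1 : |∏ j ∈ Finset.Ioc a (k - 1), (x - (j : ℝ))| ≤
        ((k - a - 1).toNat.factorial : ℝ) := by
      rw [Finset.abs_prod]
      have hb : ∏ j ∈ Finset.Ioc a (k - 1), |x - (j : ℝ)| ≤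
          ∏ j ∈ Finset.Ioc a (k - 1), ((k : ℝ) - j) := by
        refine Finset.prod_le_prod (fun j _ => abs_nonneg _) (fun j hj => ?_)
        rw [Finset.mem_Ioc] at hj
        have hj2 : (j : ℝ) ≤ (k : ℝ) - 1 := by exact_mod_cast
          (show (j : ℝ) ≤ ((k - 1 : ℤ) : ℝ) by exact_mod_cast hj.2)
        rw [abs_le]; constructor <;> nlinarith
      refine hb.trans_eq ?_
      have himg : (Finset.Ioc a (k - 1)).image (fun j => k - j) = Finset.Ioc 0 (k - a - 1) := by
        ext y; simp only [Finset.mem_image, Finset.mem_Ioc]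
        constructor
        · rintro ⟨j, ⟨hj1, hj2⟩, rfl⟩; omega
        · intro h; exact ⟨k - y, ⟨by omega, by omega⟩, by omega⟩
      have key := helperProd 0 (k - a - 1) (by omega)
      rw [← himg, Finset.prod_image (fun u _ v _ h => by omega)] at key
      simp only [Int.cast_zero, sub_zero] at key
      rw [← key]
      refine Finset.prod_congr rfl (fun j _ => ?_)
      push_cast; ring
    have h2 : |∏ j ∈ Finset.Ioc (k - 1) n, (x - (j : ℝ))| ≤
        ((n - k + 1).toNat.factorial : ℝ) := by
      rw [Finset.abs_prod]
      have hb : ∏ j ∈ Finset.Ioc (k - 1) n, |x - (j : ℝ)| ≤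
          ∏ j ∈ Finset.Ioc (k - 1) n, ((j : ℝ) - ((k - 1 : ℤ) : ℝ)) := by
        refine Finset.prod_le_prod (fun j _ => abs_nonneg _) (fun j hj => ?_)
        rw [Finset.mem_Ioc] at hj
        have hj1 : ((k - 1 : ℤ) : ℝ) < (j : ℝ) := by exact_mod_cast hj.1
        have hk : ((k - 1 : ℤ) : ℝ) = (k : ℝ) - 1 := by push_cast; ring
        have hjk : (k : ℝ) ≤ (j : ℝ) := by exact_mod_cast (show k ≤ j by omega)
        rw [hk, abs_le]; constructor <;> linarith
      refine hb.trans_eq ?_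
      have key := helperProd (k - 1) n (by omega)
      have : n - (k - 1) = n - k + 1 := by ring
      rw [this] at key
      exact key
    calc |∏ j ∈ Finset.Ioc a (k - 1), (x - (j : ℝ))| * |∏ j ∈ Finset.Ioc (k - 1) n, (x - (j : ℝ))|
        ≤ ((k - a - 1).toNat.factorial : ℝ) * ((n - k + 1).toNat.factorial : ℝ) :=
          mul_le_mul h1 h2 (abs_nonneg _) (by positivity)
      _ = _ := by norm_num
  · -- part 2
    have hdvd := Nat.factorial_mul_factorial_dvd_factorial_add (k - a - 1).toNat (n - k + 1).toNat
    have hsum : (k - a - 1).toNat + (n - k + 1).toNat = (n - a).toNat := by omega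
    rw [hsum] at hdvd
    have := Nat.le_of_dvd (Nat.factorial_pos _) hdvd
    exact_mod_cast this
  · -- part 3
    rw [hIcc, Finset.abs_prod]
    have key := helperProd a n (by omega)
    rw [← key]
    refine Finset.prod_le_prod (fun j hj => ?_) (fun j hj => ?_)
    · rw [Finset.mem_Ioc] at hj
      have : (a : ℝ) < j := by exact_mod_cast hj.1
      linarith
    · rw [Finset.mem_Ioc] at hj
      have : (a : ℝ) < j := by exact_mod_cast hj.1
      rw [abs_of_nonpos (by linarith)]
      linarith
end

section
/- Let a < n be integers, s ∈ (0,1), W(x) = ∏_{j=a+1}^n (x − j), and define m_s(x) = (W(a − s) − W(x)) / (W(a − s)·(x − a + s)). Then m_s is the unique polynomial of degree at most n − a − 1 satisfying m_s(j) = 1/(j − a + s) for all integers j ∈ {a+1, …, n}, and m_s(x) ≥ 0 for all x ∈ [a+1, n]. -/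
open Finset Polynomial

private lemma prodIocCast (K : ℕ) :
    ∏ i ∈ Finset.Ioc (0:ℤ) (K:ℤ), (i:ℝ) = (Nat.factorial K : ℝ) := by
  induction K with
  | zero => simp
  | succ k ih =>
    have h : Finset.Ioc (0:ℤ) ((k+1 : ℕ):ℤ) = insert ((k:ℤ)+1) (Finset.Ioc (0:ℤ) (k:ℤ)) := by
      ext x; simp only [Finset.mem_Ioc, Finset.mem_insert]; omega
    rw [h, Finset.prod_insert (by simp), ih, Nat.factorial_succ]
    push_cast; ring

private lemma absW_le (a n : ℤ) (han : a + 1 ≤ n) (s : ℝ) (hs0 : 0 < s)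
    (x : ℝ) (hx1 : (a:ℝ) + 1 ≤ x) (hx2 : x ≤ (n:ℝ)) :
    ∏ j ∈ Finset.Ioc a n, |x - (j:ℝ)| ≤ ∏ j ∈ Finset.Ioc a n, ((j:ℝ) - a + s) := by
  set m : ℤ := ⌊x⌋ with hm
  have ham : a + 1 ≤ m := Int.le_floor.2 (by exact_mod_cast hx1)
  have hmn : m ≤ n := by exact_mod_cast le_trans (Int.floor_le x) hx2
  have hmx : (m:ℝ) ≤ x := Int.floor_le x
  have hxm : x < (m:ℝ) + 1 := Int.lt_floor_add_one x
  have ham' : a ≤ m := by omega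
  have hdisj : Disjoint (Finset.Ioc a m) (Finset.Ioc m n) := by
    simp only [Finset.disjoint_left, Finset.mem_Ioc]; omega
  have hsplit : ∀ f : ℤ → ℝ, ∏ j ∈ Finset.Ioc a n, f j
      = (∏ j ∈ Finset.Ioc a m, f j) * ∏ j ∈ Finset.Ioc m n, f j := by
    intro f
    rw [← Finset.Ioc_union_Ioc_eq_Ioc ham' hmn, Finset.prod_union hdisj]
  set K : ℕ := (m - a).toNat with hK
  set L : ℕ := (n - m).toNat with hL
  set D : ℕ := (n - a).toNat with hD
  have hKZ : ((K:ℤ)) = m - a := by omega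
  have hLZ : ((L:ℤ)) = n - m := by omega
  have hDZ : ((D:ℤ)) = n - a := by omega
  have hKLD : K + L = D := by omega
  have step1 : ∏ j ∈ Finset.Ioc a m, |x - (j:ℝ)| ≤ ∏ j ∈ Finset.Ioc a m, ((m:ℝ) + 1 - j) := by
    apply Finset.prod_le_prod (fun j _ => abs_nonneg _)
    intro j hj
    rw [Finset.mem_Ioc] at hj
    have hjm : (j:ℝ) ≤ (m:ℝ) := by exact_mod_cast hj.2
    rw [abs_of_nonneg (by linarith)]
    linarith
  have step2 : ∏ j ∈ Finset.Ioc m n, |x - (j:ℝ)| ≤ ∏ j ∈ Finset.Ioc m n, ((j:ℝ) - m) := by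
    apply Finset.prod_le_prod (fun j _ => abs_nonneg _)
    intro j hj
    rw [Finset.mem_Ioc] at hj
    have hjm : (m:ℝ) + 1 ≤ (j:ℝ) := by exact_mod_cast hj.1
    rw [abs_of_nonpos (by linarith)]
    linarith
  have stepA : ∏ j ∈ Finset.Ioc a m, ((m:ℝ) + 1 - j) = ∏ i ∈ Finset.Ioc (0:ℤ) (m - a), (i:ℝ) := by
    apply Finset.prod_nbij' (fun j => m + 1 - j) (fun i => m + 1 - i)
    · intro j hj; rw [Finset.mem_Ioc] at hj ⊢; omega
    · intro i hi; rw [Finset.mem_Ioc] at hi ⊢; omega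
    · intro j _; ring
    · intro i _; ring
    · intro j _; push_cast; ring
  have stepB : ∏ j ∈ Finset.Ioc m n, ((j:ℝ) - m) = ∏ i ∈ Finset.Ioc (0:ℤ) (n - m), (i:ℝ) := by
    apply Finset.prod_nbij' (fun j => j - m) (fun i => i + m)
    · intro j hj; rw [Finset.mem_Ioc] at hj ⊢; omega
    · intro i hi; rw [Finset.mem_Ioc] at hi ⊢; omega
    · intro j _; ring
    · intro i _; ring
    · intro j _; push_cast; ring
  have hfact : (Nat.factorial K : ℝ) * (Nat.factorial L : ℝ) ≤ (Nat.factorial D : ℝ) := by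
    have := Nat.le_of_dvd (Nat.factorial_pos (K + L))
      (Nat.factorial_mul_factorial_dvd_factorial_add K L)
    rw [hKLD] at this
    exact_mod_cast this
  have stepC : (Nat.factorial D : ℝ) ≤ ∏ i ∈ Finset.Ioc (0:ℤ) (n - a), ((i:ℝ) + s) := by
    rw [← hDZ, ← prodIocCast D]
    apply Finset.prod_le_prod
    · intro i hi; rw [Finset.mem_Ioc] at hi
      have : (1:ℝ) ≤ (i:ℝ) := by exact_mod_cast hi.1
      linarith
    · intro i _; linarith
  have stepD : ∏ i ∈ Finset.Ioc (0:ℤ) (n - a), ((i:ℝ) + s)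
      = ∏ j ∈ Finset.Ioc a n, ((j:ℝ) - a + s) := by
    apply Finset.prod_nbij' (fun i => i + a) (fun j => j - a)
    · intro i hi; rw [Finset.mem_Ioc] at hi ⊢; omega
    · intro j hj; rw [Finset.mem_Ioc] at hj ⊢; omega
    · intro i _; ring
    · intro j _; ring
    · intro i _; push_cast; ring
  calc ∏ j ∈ Finset.Ioc a n, |x - (j:ℝ)|
      = (∏ j ∈ Finset.Ioc a m, |x - (j:ℝ)|) * ∏ j ∈ Finset.Ioc m n, |x - (j:ℝ)| := hsplit _
    _ ≤ (∏ j ∈ Finset.Ioc a m, ((m:ℝ) + 1 - j)) * ∏ j ∈ Finset.Ioc m n, ((j:ℝ) - m) := by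
        apply mul_le_mul step1 step2 (Finset.prod_nonneg fun j _ => abs_nonneg _)
        apply Finset.prod_nonneg
        intro j hj
        rw [Finset.mem_Ioc] at hj
        have : (j:ℝ) ≤ (m:ℝ) := by exact_mod_cast hj.2
        linarith
    _ = (∏ i ∈ Finset.Ioc (0:ℤ) (m - a), (i:ℝ)) * ∏ i ∈ Finset.Ioc (0:ℤ) (n - m), (i:ℝ) := by
        rw [stepA, stepB]
    _ = (Nat.factorial K : ℝ) * (Nat.factorial L : ℝ) := by
        rw [← prodIocCast K, ← prodIocCast L, hKZ, hLZ]
    _ ≤ (Nat.factorial D : ℝ) := hfact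
    _ ≤ ∏ i ∈ Finset.Ioc (0:ℤ) (n - a), ((i:ℝ) + s) := stepC
    _ = ∏ j ∈ Finset.Ioc a n, ((j:ℝ) - a + s) := stepD

theorem stmt12 (a n : ℤ) (han : a + 1 ≤ n) (s : ℝ) (hs : s ∈ Set.Ioo (0 : ℝ) 1)
    (W : ℝ → ℝ) (hW : ∀ x : ℝ, W x = ∏ j ∈ Finset.Icc (a + 1) n, (x - (j : ℝ))) :
    (∃! p : Polynomial ℝ, p.natDegree ≤ (n - a - 1).toNat ∧
        ∀ j ∈ Finset.Icc (a + 1) n, p.eval (j : ℝ) = 1 / ((j : ℝ) - a + s)) ∧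
      ∀ p : Polynomial ℝ, (p.natDegree ≤ (n - a - 1).toNat ∧
          ∀ j ∈ Finset.Icc (a + 1) n, p.eval (j : ℝ) = 1 / ((j : ℝ) - a + s)) →
        ∀ x ∈ Set.Icc ((a : ℝ) + 1) (n : ℝ),
          p.eval x = (W ((a : ℝ) - s) - W x) / (W ((a : ℝ) - s) * (x - a + s)) ∧
            0 ≤ p.eval x := by
  obtain ⟨hs0, hs1⟩ := hs
  set N : Finset ℤ := Finset.Icc (a + 1) n with hN
  set d : ℕ := (n - a).toNat with hd
  have hcard : N.card = d := by
    rw [hN, Int.card_Icc]; congr 1; omega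
  have hinj : Set.InjOn (fun j : ℤ => (j : ℝ)) N := fun p _ q _ h => by simpa using h
  -- positivity of the node denominators
  have hpos : ∀ j ∈ N, (0:ℝ) < (j:ℝ) - a + s := by
    intro j hj
    rw [hN, Finset.mem_Icc] at hj
    have : (a:ℝ) + 1 ≤ (j:ℝ) := by exact_mod_cast hj.1
    linarith
  set r : ℤ → ℝ := fun j => 1 / ((j:ℝ) - a + s) with hr
  set P₀ : Polynomial ℝ := Lagrange.interpolate N (fun j : ℤ => (j : ℝ)) r with hP₀
  have hdeg₀ : P₀.degree < (N.card : WithBot ℕ) := Lagrange.degree_interpolate_lt _ hinj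
  have hdlt : ∀ q : Polynomial ℝ, q.natDegree ≤ (n - a - 1).toNat →
      q.degree < (N.card : WithBot ℕ) := by
    intro q hq
    refine lt_of_le_of_lt q.degree_le_natDegree ?_
    rw [hcard]
    exact_mod_cast (show q.natDegree < d by omega)
  have hndeg₀ : P₀.natDegree ≤ (n - a - 1).toNat := by
    rcases eq_or_ne P₀ 0 with h0 | h0
    · rw [h0]; simp
    · have := (Polynomial.natDegree_lt_iff_degree_lt h0).2 (by rwa [hcard] at hdeg₀)
      omega
  have heval₀ : ∀ j ∈ N, P₀.eval (j:ℝ) = 1 / ((j:ℝ) - a + s) := by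
    intro j hj
    exact Lagrange.eval_interpolate_at_node r hinj hj
  have huniq : ∀ q : Polynomial ℝ, (q.natDegree ≤ (n - a - 1).toNat ∧
      ∀ j ∈ N, q.eval (j:ℝ) = 1 / ((j:ℝ) - a + s)) → q = P₀ := by
    intro q ⟨hq1, hq2⟩
    exact Lagrange.eq_interpolate_of_eval_eq r hinj (hdlt q hq1) hq2
  constructor
  · exact ⟨P₀, ⟨hndeg₀, heval₀⟩, huniq⟩
  · intro p hp x hx
    obtain ⟨hx1, hx2⟩ := hx
    -- the polynomial version of W
    set Wp : Polynomial ℝ := ∏ j ∈ N, (X - C ((j:ℝ))) with hWp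
    have hWeval : ∀ y : ℝ, W y = Wp.eval y := by
      intro y
      rw [hW, hWp, Polynomial.eval_prod]
      exact Finset.prod_congr rfl fun j _ => by simp
    set c : ℝ := W ((a:ℝ) - s) with hc
    have hcprod : c = ∏ j ∈ N, ((a:ℝ) - s - j) := hW _
    have hfacneg : ∀ j ∈ N, (a:ℝ) - s - j < 0 := by
      intro j hj
      rw [hN, Finset.mem_Icc] at hj
      have : (a:ℝ) + 1 ≤ (j:ℝ) := by exact_mod_cast hj.1
      linarith
    have hcne : c ≠ 0 := by
      rw [hcprod]
      exact Finset.prod_ne_zero_iff.2 fun j hj => ne_of_lt (hfacneg j hj)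
    have habsc : |c| = ∏ j ∈ N, ((j:ℝ) - a + s) := by
      rw [hcprod, Finset.abs_prod]
      exact Finset.prod_congr rfl fun j hj => by
        rw [abs_of_nonpos (le_of_lt (hfacneg j hj))]; ring
    -- the interpolation nodes together with a - s, as a real finset
    set S : Finset ℝ := insert ((a:ℝ) - s) (N.image (fun j : ℤ => (j:ℝ))) with hS
    have hnotmem : ((a:ℝ) - s) ∉ N.image (fun j : ℤ => (j:ℝ)) := by
      simp only [Finset.mem_image, not_exists, not_and]
      intro j hj
      rw [hN, Finset.mem_Icc] at hj
      have : (a:ℝ) + 1 ≤ (j:ℝ) := by exact_mod_cast hj.1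
      intro h; linarith
    have hScard : S.card = d + 1 := by
      rw [hS, Finset.card_insert_of_notMem hnotmem,
        Finset.card_image_of_injective _ (fun p q h => by simpa using h), hcard]
    -- key polynomial identity
    set Lp : Polynomial ℝ := (X - C ((a:ℝ) - s)) * (C c * p) with hLp
    set Rp : Polynomial ℝ := C c - Wp with hRp
    have hdegL : Lp.degree < (S.card : WithBot ℕ) := by
      refine lt_of_le_of_lt Lp.degree_le_natDegree ?_
      have h1 : Lp.natDegree ≤ 1 + p.natDegree := by
        refine le_trans (Polynomial.natDegree_mul_le) ?_
        gcongr
        · exact le_of_eq (Polynomial.natDegree_X_sub_C _)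
        · exact le_trans Polynomial.natDegree_mul_le (by simp)
      have : Lp.natDegree < d + 1 := by
        have := hp.1; omega
      rw [hScard]
      exact_mod_cast this
    have hdegR : Rp.degree < (S.card : WithBot ℕ) := by
      refine lt_of_le_of_lt Rp.degree_le_natDegree ?_
      have hWdeg : Wp.natDegree ≤ d := by
        refine le_trans (Polynomial.natDegree_prod_le _ _) (le_of_eq ?_)
        have h1 : ∀ j ∈ N, (X - C ((j:ℝ))).natDegree = 1 :=
          fun j _ => Polynomial.natDegree_X_sub_C _
        rw [Finset.sum_congr rfl h1, Finset.sum_const, smul_eq_mul, mul_one, hcard]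
      have : Rp.natDegree < d + 1 := by
        have := Polynomial.natDegree_sub_le (C c) Wp
        have hC : (C c).natDegree = 0 := Polynomial.natDegree_C _
        rw [hRp]
        omega
      rw [hScard]
      exact_mod_cast this
    have hWnode : ∀ j ∈ N, Wp.eval ((j:ℝ)) = 0 := by
      intro j hj
      rw [hWp, Polynomial.eval_prod]
      exact Finset.prod_eq_zero hj (by simp)
    have hkey : Lp = Rp := by
      apply Polynomial.eq_of_degrees_lt_of_eval_index_eq (v := id) S (Set.injOn_id _) hdegL hdegR
      intro y hy
      rw [hS, Finset.mem_insert] at hy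
      rcases hy with hy | hy
      · subst hy
        simp only [hLp, hRp, id_eq, Polynomial.eval_mul, Polynomial.eval_sub, Polynomial.eval_X,
          Polynomial.eval_C]
        rw [sub_self, zero_mul, ← hWeval, ← hc, sub_self]
      · rw [Finset.mem_image] at hy
        obtain ⟨j, hj, rfl⟩ := hy
        have hpj := hp.2 j hj
        have hjpos := hpos j hj
        simp only [hLp, hRp, id_eq, Polynomial.eval_mul, Polynomial.eval_sub, Polynomial.eval_X,
          Polynomial.eval_C, hpj, hWnode j hj]
        rw [sub_zero]
        field_simp
        ring
    -- evaluate the identity at x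
    have hxeq : (x - ((a:ℝ) - s)) * (c * p.eval x) = c - W x := by
      have := congrArg (Polynomial.eval x) hkey
      simp only [hLp, hRp, Polynomial.eval_mul, Polynomial.eval_sub, Polynomial.eval_X,
        Polynomial.eval_C] at this
      rw [hWeval x]
      linarith [this]
    have ht : (0:ℝ) < x - a + s := by linarith
    have htne : x - a + s ≠ 0 := ne_of_gt ht
    have hxas : x - ((a:ℝ) - s) = x - a + s := by ring
    have hform : p.eval x = (c - W x) / (c * (x - a + s)) := by
      rw [eq_div_iff (mul_ne_zero hcne htne)]
      rw [hxas] at hxeq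
      linarith [hxeq]
    -- |W x| ≤ |c|
    have hIoc : N = Finset.Ioc a n := by
      rw [hN]; ext j; simp only [Finset.mem_Icc, Finset.mem_Ioc]; omega
    have habsW : |W x| ≤ |c| := by
      rw [hW x, Finset.abs_prod, habsc, hIoc]
      exact absW_le a n han s hs0 x hx1 hx2
    have hnum : 0 ≤ c * (c - W x) := by
      have h1 : c * W x ≤ |c| * |W x| := by
        calc c * W x ≤ |c * W x| := le_abs_self _
          _ = |c| * |W x| := abs_mul _ _
      have h2 : |c| * |W x| ≤ |c| * |c| := by
        exact mul_le_mul_of_nonneg_left habsW (abs_nonneg c)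
      have h3 : |c| * |c| = c * c := abs_mul_abs_self c
      nlinarith
    have hden : 0 ≤ c * (c * (x - a + s)) := by
      have : c * (c * (x - a + s)) = c ^ 2 * (x - a + s) := by ring
      rw [this]; positivity
    have hnonneg : 0 ≤ p.eval x := by
      rw [hform, ← mul_div_mul_left (c - W x) (c * (x - a + s)) hcne]
      exact div_nonneg hnum hden
    exact ⟨by rw [hform, hc], hnonneg⟩
end

section
/- Let f : [a, b] → ℝ be (k+1)-times continuously differentiable with sign(f^{(j)}(ξ)) = (−1)^j for all ξ ∈ [a,b] and all j ≤ k+1 (i.e., f is completely monotone up to order k+1 on [a,b]). Let M be the polynomial of degree at most k interpolating f at nodes a = x₀ < x₁ < ⋯ < x_k = b with x_i = a + i. Then M is non-increasing on (−∞, a]. -/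
open Finset Polynomial Set

namespace Stmt13Aux

/-- forward difference operator -/
noncomputable def fwd (g : ℝ → ℝ) : ℝ → ℝ := fun x => g (x + 1) - g x

lemma fwd_iter_neg (r : ℕ) : ∀ (g : ℝ → ℝ),
    fwd^[r] (fun x => -g x) = fun x => -(fwd^[r] g x) := by
  induction r with
  | zero => intro g; rfl
  | succ r ih =>
    intro g
    rw [Function.iterate_succ_apply, Function.iterate_succ_apply]
    have h : fwd (fun x => -g x) = fun x => -(fwd g x) := by
      funext x; simp only [fwd]; ring
    rw [h, ih]

lemma fwd_iter_smul (r : ℕ) (c : ℝ) : ∀ (g : ℝ → ℝ),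
    fwd^[r] (fun x => c * g x) = fun x => c * fwd^[r] g x := by
  induction r with
  | zero => intro g; rfl
  | succ r ih =>
    intro g
    rw [Function.iterate_succ_apply, Function.iterate_succ_apply]
    have h : fwd (fun x => c * g x) = fun x => c * fwd g x := by
      funext x; simp only [fwd]; ring
    rw [h, ih]

lemma fwd_iter_sum {ι : Type*} (t : Finset ι) (r : ℕ) (g : ι → ℝ → ℝ) :
    fwd^[r] (fun x => ∑ s ∈ t, g s x) = fun x => ∑ s ∈ t, fwd^[r] (g s) x := by
  induction r with
  | zero => rfl
  | succ r ih =>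
    rw [Function.iterate_succ_apply', ih]
    funext x
    simp only [fwd, Function.iterate_succ_apply']
    rw [← Finset.sum_sub_distrib]

lemma fwd_iter_congr (r : ℕ) : ∀ (g h : ℝ → ℝ) (x : ℝ),
    (∀ i : ℕ, i ≤ r → g (x + i) = h (x + i)) → fwd^[r] g x = fwd^[r] h x := by
  induction r with
  | zero =>
    intro g h x hgh
    simpa using hgh 0 le_rfl
  | succ r ih =>
    intro g h x hgh
    rw [Function.iterate_succ_apply, Function.iterate_succ_apply]
    refine ih _ _ _ fun i hi => ?_
    simp only [fwd]
    have h1 := hgh i (hi.trans (Nat.le_succ r))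
    have h2 := hgh (i + 1) (Nat.succ_le_succ hi)
    have e : x + i + 1 = x + ((i : ℕ) + 1 : ℕ) := by push_cast; ring
    rw [e, h2, h1]

lemma iteratedDeriv_sub' {n : ℕ} {f g : ℝ → ℝ} (hf : ContDiff ℝ n f) (hg : ContDiff ℝ n g) :
    iteratedDeriv n (fun x => f x - g x) = fun x => iteratedDeriv n f x - iteratedDeriv n g x := by
  funext x
  have h := iteratedDerivWithin_sub (Set.mem_univ x) uniqueDiffOn_univ
    (hf.contDiffWithinAt) (hg.contDiffWithinAt)
  simpa [iteratedDerivWithin_univ, Pi.sub_def] using h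

/-- key sign lemma for iterated forward differences -/
lemma fwd_iter_sign (r : ℕ) : ∀ (f : ℝ → ℝ) (a : ℝ), ContDiff ℝ r f →
    (∀ j : ℕ, j ≤ r → ∀ ξ ∈ Set.Icc a (a + r), 0 < (-1 : ℝ) ^ j * iteratedDeriv j f ξ) →
    0 < (-1 : ℝ) ^ r * fwd^[r] f a := by
  induction r with
  | zero =>
    intro f a _ hs
    simpa using hs 0 le_rfl a (by simp)
  | succ r ih =>
    intro f a hf hs
    set g : ℝ → ℝ := fun x => f x - f (x + 1) with hgdef
    have hcast : ((r : ℝ)) ≤ ((r : ℕ) + 1 : ℕ) := by push_cast; linarith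
    have hfr : ContDiff ℝ r f := hf.of_le (by exact_mod_cast Nat.le_succ r)
    have hshift : ContDiff ℝ r (fun x : ℝ => f (x + 1)) :=
      hfr.comp (contDiff_id.add contDiff_const)
    have hg : ContDiff ℝ r g := hfr.sub hshift
    -- iterated derivatives of g
    have hgj : ∀ j : ℕ, j ≤ r → ∀ ξ : ℝ,
        iteratedDeriv j g ξ = iteratedDeriv j f ξ - iteratedDeriv j f (ξ + 1) := by
      intro j hj ξ
      have hfj : ContDiff ℝ j f := hfr.of_le (by exact_mod_cast hj)
      have hsj : ContDiff ℝ j (fun x : ℝ => f (x + 1)) :=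
        hfj.comp (contDiff_id.add contDiff_const)
      rw [hgdef, iteratedDeriv_sub' hfj hsj, iteratedDeriv_comp_add_const j f 1]
    -- sign hypothesis for g
    have hsg : ∀ j : ℕ, j ≤ r → ∀ ξ ∈ Set.Icc a (a + r),
        0 < (-1 : ℝ) ^ j * iteratedDeriv j g ξ := by
      intro j hj ξ hξ
      obtain ⟨hξ1, hξ2⟩ := hξ
      have hdiff : Differentiable ℝ (iteratedDeriv j f) := by
        refine hf.differentiable_iteratedDeriv j ?_
        exact_mod_cast Nat.lt_succ_of_le hj
      obtain ⟨η, hη, hslope⟩ := exists_hasDerivAt_eq_slope (iteratedDeriv j f)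
        (iteratedDeriv (j + 1) f) (by linarith : ξ < ξ + 1)
        (hdiff.continuous.continuousOn)
        (fun y _ => by
          rw [iteratedDeriv_succ]
          exact (hdiff y).hasDerivAt)
      have hval : iteratedDeriv j f (ξ + 1) - iteratedDeriv j f ξ
          = iteratedDeriv (j + 1) f η := by
        rw [hslope]; ring
      have hηmem : η ∈ Set.Icc a (a + ((r : ℕ) + 1 : ℕ)) := by
        obtain ⟨h1, h2⟩ := hη
        constructor <;> push_cast <;> linarith
      have hpos := hs (j + 1) (Nat.succ_le_succ hj) η hηmem
      rw [hgj j hj ξ]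
      have : iteratedDeriv j f ξ - iteratedDeriv j f (ξ + 1) = -iteratedDeriv (j + 1) f η := by
        rw [← hval]; ring
      rw [this]
      rw [pow_succ] at hpos
      nlinarith [hpos]
    have hgpos := ih g a hg hsg
    have hgneg : g = fun x => -(fwd f x) := by
      funext x; simp only [fwd, hgdef]; ring
    rw [hgneg, fwd_iter_neg] at hgpos
    have hgpos' : 0 < (-1 : ℝ) ^ r * -(fwd^[r] (fwd f) a) := hgpos
    rw [Function.iterate_succ_apply, pow_succ]
    nlinarith [hgpos']

/-- Newton basis polynomial -/
noncomputable def P (a : ℝ) (r : ℕ) : Polynomial ℝ :=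
  ∏ i ∈ Finset.range r, (X - C (a + i))

lemma P_monic (a : ℝ) (r : ℕ) : (P a r).Monic :=
  monic_prod_of_monic _ _ fun i _ => monic_X_sub_C _

lemma P_natDegree (a : ℝ) (r : ℕ) : (P a r).natDegree = r := by
  rw [P, natDegree_prod_of_monic _ _ fun i _ => monic_X_sub_C _]
  simp only [natDegree_X_sub_C, Finset.sum_const, Finset.card_range, smul_eq_mul, mul_one]

lemma eval_P (a : ℝ) (r : ℕ) (x : ℝ) :
    (P a r).eval x = ∏ i ∈ Finset.range r, (x - (a + i)) := by
  simp [P, eval_prod]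

lemma eval_P_zero (a : ℝ) (m : ℕ) (hm : 1 ≤ m) : (P a m).eval a = 0 := by
  rw [eval_P]
  refine Finset.prod_eq_zero (Finset.mem_range.mpr hm) ?_
  simp

lemma fwd_eval_P (a : ℝ) (s : ℕ) :
    fwd (fun x => (P a (s + 1)).eval x) = fun x => ((s : ℝ) + 1) * (P a s).eval x := by
  funext x
  simp only [fwd, eval_P]
  rw [Finset.prod_range_succ', Finset.prod_range_succ]
  have h : ∀ i ∈ Finset.range s, (x + 1 - (a + ((i : ℕ) + 1 : ℕ))) = x - (a + i) := by
    intro i _; push_cast; ring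
  rw [Finset.prod_congr rfl h]
  push_cast
  ring

lemma fwd_iter_eval_P (a : ℝ) (r : ℕ) : ∀ s : ℕ,
    fwd^[r] (fun x => (P a s).eval x)
      = fun x => (s.descFactorial r : ℝ) * (P a (s - r)).eval x := by
  induction r with
  | zero => intro s; funext x; simp
  | succ r ih =>
    intro s
    rw [Function.iterate_succ_apply]
    match s with
    | 0 =>
      have h0 : fwd (fun x => (P a 0).eval x) = fun x => (0 : ℝ) * (P a 0).eval x := by
        funext x; simp [fwd, P]
      rw [h0, fwd_iter_smul, ih 0]
      funext x; simp
    | t + 1 =>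
      rw [fwd_eval_P, show (fun x => ((t : ℝ) + 1) * (P a t).eval x)
        = fun x => ((t : ℝ) + 1) * ((fun y => (P a t).eval y) x) from rfl,
        fwd_iter_smul, ih t]
      funext x
      rw [Nat.succ_descFactorial_succ, Nat.succ_sub_succ]
      push_cast
      ring

/-- decomposition of a polynomial in the Newton basis -/
lemma decomp (a : ℝ) : ∀ (k : ℕ) (M : Polynomial ℝ), M.natDegree ≤ k →
    ∃ c : ℕ → ℝ, M = ∑ r ∈ Finset.range (k + 1), C (c r) * P a r := by
  intro k
  induction k with
  | zero =>
    intro M hM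
    refine ⟨fun _ => M.coeff 0, ?_⟩
    rw [Polynomial.eq_C_of_natDegree_le_zero hM]
    simp [P]
  | succ k ih =>
    intro M hM
    set c0 := M.coeff (k + 1) with hc0
    have hM' : (M - C c0 * P a (k + 1)).natDegree ≤ k := by
      rw [natDegree_le_iff_coeff_eq_zero]
      intro N hN
      rw [coeff_sub, coeff_C_mul]
      rcases eq_or_lt_of_le (Nat.succ_le_of_lt hN) with h | h
      · rw [← h]
        have : (P a (k + 1)).coeff (k + 1) = 1 := by
          have := (P_monic a (k + 1)).coeff_natDegree
          rwa [P_natDegree] at this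
        rw [this, mul_one, hc0, sub_self]
      · have h1 : M.coeff N = 0 := coeff_eq_zero_of_natDegree_lt (lt_of_le_of_lt hM h)
        have h2 : (P a (k + 1)).coeff N = 0 := by
          apply coeff_eq_zero_of_natDegree_lt
          rw [P_natDegree]; exact h
        rw [h1, h2, mul_zero, sub_zero]
    obtain ⟨c, hc⟩ := ih _ hM'
    refine ⟨fun r => if r = k + 1 then c0 else c r, ?_⟩
    rw [Finset.sum_range_succ]
    rw [show (fun r => if r = k + 1 then c0 else c r) (k + 1) = c0 from if_pos rfl]
    have hsum : ∑ r ∈ Finset.range (k + 1),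
          C ((fun r => if r = k + 1 then c0 else c r) r) * P a r
        = ∑ r ∈ Finset.range (k + 1), C (c r) * P a r := by
      refine Finset.sum_congr rfl fun r hr => ?_
      rw [show (fun r => if r = k + 1 then c0 else c r) r = c r from
        if_neg (Nat.ne_of_lt (Finset.mem_range.mp hr))]
    rw [hsum, ← hc]
    ring

lemma sign_to_pos {y : ℝ} {j : ℕ} (h : Real.sign y = (-1 : ℝ) ^ j) :
    0 < (-1 : ℝ) ^ j * y := by
  rcases Nat.even_or_odd j with he | ho
  · rw [he.neg_one_pow] at h ⊢
    rcases lt_trichotomy y 0 with h1 | h1 | h1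
    · rw [Real.sign_of_neg h1] at h; norm_num at h
    · rw [h1, Real.sign_zero] at h; norm_num at h
    · linarith
  · rw [ho.neg_one_pow] at h ⊢
    rcases lt_trichotomy y 0 with h1 | h1 | h1
    · nlinarith
    · rw [h1, Real.sign_zero] at h; norm_num at h
    · rw [Real.sign_of_pos h1] at h; norm_num at h

lemma eval_P_sign (a x : ℝ) (hx : x ≤ a) (r : ℕ) :
    0 ≤ (-1 : ℝ) ^ r * (P a r).eval x := by
  rw [eval_P]
  have hneg : ∀ i ∈ Finset.range r, x - (a + (i : ℝ)) = (-1) * ((a + i) - x) := by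
    intro i _; ring
  rw [Finset.prod_congr rfl hneg, Finset.prod_mul_distrib, Finset.prod_const, Finset.card_range]
  have h1 : (-1 : ℝ) ^ r * ((-1 : ℝ) ^ r * ∏ i ∈ Finset.range r, ((a + (i : ℝ)) - x))
      = ∏ i ∈ Finset.range r, ((a + (i : ℝ)) - x) := by
    rw [← mul_assoc, ← pow_add, ← two_mul, pow_mul, neg_one_sq, one_pow, one_mul]
  rw [h1]
  refine Finset.prod_nonneg fun i _ => ?_
  have : (0 : ℝ) ≤ (i : ℝ) := Nat.cast_nonneg i
  linarith

lemma eval_deriv_P_sign (a x : ℝ) (hx : x ≤ a) : ∀ r : ℕ,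
    0 ≤ (-1 : ℝ) ^ r * (Polynomial.derivative (P a (r + 1))).eval x := by
  intro r
  induction r with
  | zero =>
    have : P a 1 = X - C (a + (0 : ℕ)) := by
      rw [P, Finset.prod_range_one]
    rw [this, derivative_X_sub_C]
    simp
  | succ r ih =>
    have hsplit : P a (r + 2) = P a (r + 1) * (X - C (a + ((r : ℝ) + 1))) := by
      rw [P, P, Finset.prod_range_succ]
      norm_num
    rw [hsplit, derivative_mul, derivative_X_sub_C, mul_one, eval_add, eval_mul]
    simp only [eval_sub, eval_X, eval_C]
    have h2 := eval_P_sign a x hx (r + 1)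
    have h3 : (0 : ℝ) ≤ (a + ((r : ℝ) + 1)) - x := by
      have : (0 : ℝ) ≤ (r : ℝ) := Nat.cast_nonneg r
      linarith
    have h4 := mul_nonneg ih h3
    rw [pow_succ] at h2 ⊢
    nlinarith [h4, h2]

end Stmt13Aux

open Stmt13Aux Finset Polynomial Set

theorem stmt13 (k : ℕ) (a b : ℝ) (hab : b = a + k) (f : ℝ → ℝ)
    (hf : ContDiff ℝ (k + 1) f)
    (hsign : ∀ j : ℕ, j ≤ k + 1 → ∀ ξ ∈ Set.Icc a b,
      Real.sign (iteratedDeriv j f ξ) = (-1 : ℝ) ^ j)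
    (M : Polynomial ℝ) (hdeg : M.natDegree ≤ k)
    (hinterp : ∀ i : ℕ, i ≤ k → M.eval (a + i) = f (a + i)) :
    AntitoneOn M.eval (Set.Iic a) := by
  obtain ⟨c, hc⟩ := decomp a k M hdeg
  -- the evaluation map of M as a sum
  have hMev : (fun x => M.eval x)
      = fun x => ∑ s ∈ Finset.range (k + 1), c s * (P a s).eval x := by
    funext x
    rw [hc, eval_finset_sum]
    refine Finset.sum_congr rfl fun s _ => ?_
    rw [eval_mul, eval_C]
  -- extract coefficients via forward differences
  have hcoeff : ∀ r : ℕ, r ≤ k → fwd^[r] (fun x => M.eval x) a = c r * r.factorial := by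
    intro r hr
    rw [hMev]
    have e1 : fwd^[r] (fun x => ∑ s ∈ Finset.range (k + 1), c s * (P a s).eval x) a
        = ∑ s ∈ Finset.range (k + 1), fwd^[r] (fun x => c s * (P a s).eval x) a :=
      congrFun (fwd_iter_sum (Finset.range (k + 1)) r fun s x => c s * (P a s).eval x) a
    rw [e1]
    have hterm : ∀ s ∈ Finset.range (k + 1),
        fwd^[r] (fun x => c s * (P a s).eval x) a
          = c s * ((s.descFactorial r : ℝ) * (P a (s - r)).eval a) := by
      intro s _
      have e2 : fwd^[r] (fun x => c s * (P a s).eval x) a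
          = c s * fwd^[r] (fun x => (P a s).eval x) a :=
        congrFun (fwd_iter_smul r (c s) fun x => (P a s).eval x) a
      rw [e2, congrFun (fwd_iter_eval_P a r s) a]
    rw [Finset.sum_congr rfl hterm]
    rw [Finset.sum_eq_single r]
    · rw [Nat.descFactorial_self, Nat.sub_self]
      simp [P]
    · intro s hs hsne
      rcases lt_or_gt_of_ne hsne with hlt | hgt
      · rw [Nat.descFactorial_eq_zero_iff_lt.mpr hlt]
        simp
      · rw [eval_P_zero a (s - r) (by omega)]
        simp
    · intro h
      exact absurd (Finset.mem_range.mpr (Nat.lt_succ_of_le hr)) h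
  -- forward differences of M agree with those of f
  have hfwd_eq : ∀ r : ℕ, r ≤ k → fwd^[r] (fun x => M.eval x) a = fwd^[r] f a := by
    intro r hr
    refine fwd_iter_congr r _ _ a fun i hi => ?_
    exact hinterp i (hi.trans hr)
  -- sign of the coefficients
  have hcsign : ∀ r : ℕ, r ≤ k → 0 ≤ (-1 : ℝ) ^ r * c r := by
    intro r hr
    have hfr : ContDiff ℝ r f := hf.of_le (by exact_mod_cast Nat.le_succ_of_le hr)
    have hsr : ∀ j : ℕ, j ≤ r → ∀ ξ ∈ Set.Icc a (a + r),
        0 < (-1 : ℝ) ^ j * iteratedDeriv j f ξ := by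
      intro j hj ξ hξ
      refine sign_to_pos (hsign j (by omega) ξ ?_)
      obtain ⟨h1, h2⟩ := hξ
      have : (r : ℝ) ≤ (k : ℝ) := by exact_mod_cast hr
      exact ⟨h1, by rw [hab]; linarith⟩
    have hpos := fwd_iter_sign r f a hfr hsr
    rw [← hfwd_eq r hr, hcoeff r hr] at hpos
    have hfact : (0 : ℝ) < r.factorial := by exact_mod_cast r.factorial_pos
    nlinarith [hpos, hfact]
  -- now prove antitonicity via nonpositive derivative
  refine antitoneOn_of_deriv_nonpos (convex_Iic a) ?_ ?_ ?_
  · exact M.continuous.continuousOn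
  · exact (Polynomial.differentiable M).differentiableOn
  · intro x hx
    rw [interior_Iic] at hx
    have hxa : x ≤ a := le_of_lt hx
    rw [Polynomial.deriv]
    rw [hc, derivative_sum, eval_finset_sum]
    refine Finset.sum_nonpos fun r hr => ?_
    rw [derivative_C_mul, eval_mul, eval_C]
    match r with
    | 0 => simp [P]
    | s + 1 =>
      have hsk : s + 1 ≤ k := Nat.lt_succ_iff.mp (Finset.mem_range.mp hr)
      have h1 := hcsign (s + 1) hsk
      have h2 := eval_deriv_P_sign a x hxa s
      have hm : ((-1 : ℝ) ^ s) * ((-1 : ℝ) ^ s) = 1 := by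
        rw [← pow_add, ← two_mul, pow_mul, neg_one_sq, one_pow]
      rw [pow_succ] at h1
      have hprod := mul_nonneg h1 h2
      have hexp : ((-1 : ℝ) ^ s * -1 * c (s + 1))
            * ((-1 : ℝ) ^ s * (Polynomial.derivative (P a (s + 1))).eval x)
          = -(((-1 : ℝ) ^ s * (-1 : ℝ) ^ s)
            * (c (s + 1) * (Polynomial.derivative (P a (s + 1))).eval x)) := by
        ring
      rw [hexp, hm, one_mul] at hprod
      linarith
end
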